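/- arXiv:2106.00336 — 4 statements merged into one kernel-verified Lean document; each statement's English description precedes it below -/
import Mathlib

section
/- Let A be a left-symmetric algebra, θ a 2-cocycle on A with values in V, and A_θ the corresponding central extension. Then the annihilator of A_θ equals (Ann(θ) ∩ Ann(A)) ⊕ V, where Ann(θ) = {x ∈ A : θ(x,A) + θ(A,x) = 0} and Ann(A) = {x ∈ A : xA + Ax = 0}. -/
/-- The central extension product on `A ⊕ V`. -/
def extMul {A V : Type*} [AddCommGroup A] [Module ℂ A] [AddCommGroup V] [Module ℂ V]
    (mul : A →ₗ[ℂ] A →ₗ[ℂ] A) (θ : A →ₗ[ℂ] A →ₗ[ℂ] V) (p q : A × V) : A × V :=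
  (mul p.1 q.1, θ p.1 q.1)

theorem extMul_eq_zero_iff {A V : Type*} [AddCommGroup A] [Module ℂ A] [AddCommGroup V]
    [Module ℂ V] (mul : A →ₗ[ℂ] A →ₗ[ℂ] A) (θ : A →ₗ[ℂ] A →ₗ[ℂ] V) (p q : A × V) :
    extMul mul θ p q = 0 ↔ mul p.1 q.1 = 0 ∧ θ p.1 q.1 = 0 :=
  Prod.ext_iff

theorem annihilator_of_central_extension_general
    {A V : Type*} [AddCommGroup A] [Module ℂ A] [AddCommGroup V] [Module ℂ V]
    (mul : A →ₗ[ℂ] A →ₗ[ℂ] A) (θ : A →ₗ[ℂ] A →ₗ[ℂ] V) :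
    ∀ p : A × V,
      (∀ q : A × V, extMul mul θ p q = 0 ∧ extMul mul θ q p = 0) ↔
      ((∀ y : A, mul p.1 y = 0 ∧ mul y p.1 = 0) ∧
       (∀ y : A, θ p.1 y = 0 ∧ θ y p.1 = 0)) := by
  intro p
  simp only [extMul_eq_zero_iff]
  constructor
  · intro hp
    exact ⟨fun y => ⟨(hp (y, 0)).1.1, (hp (y, 0)).2.1⟩,
      fun y => ⟨(hp (y, 0)).1.2, (hp (y, 0)).2.2⟩⟩
  · rintro ⟨hmul, hθ⟩ q
    exact ⟨⟨(hmul q.1).1, (hθ q.1).1⟩, ⟨(hmul q.1).2, (hθ q.1).2⟩⟩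

/-- For a left-symmetric algebra `A` and a 2-cocycle `θ` with values
in `V`, the annihilator of the central extension `A_θ` equals
`(Ann(θ) ∩ Ann(A)) ⊕ V`: an element `p = (x, v)` of `A ⊕ V` annihilates `A_θ`
on both sides if and only if `x ∈ Ann(A)` and `x ∈ Ann(θ)` (and `v ∈ V` is
arbitrary). -/
theorem annihilator_of_central_extension
    {A V : Type*} [AddCommGroup A] [Module ℂ A] [AddCommGroup V] [Module ℂ V]
    (mul : A →ₗ[ℂ] A →ₗ[ℂ] A) (θ : A →ₗ[ℂ] A →ₗ[ℂ] V)
    (hLS : ∀ x y z : A,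
      mul (mul x y) z - mul x (mul y z) = mul (mul y x) z - mul y (mul x z))
    (hθ : ∀ x y z : A,
      θ (mul x y) z - θ x (mul y z) = θ (mul y x) z - θ y (mul x z)) :
    ∀ p : A × V,
      (∀ q : A × V, extMul mul θ p q = 0 ∧ extMul mul θ q p = 0) ↔
      ((∀ y : A, mul p.1 y = 0 ∧ mul y p.1 = 0) ∧
       (∀ y : A, θ p.1 y = 0 ∧ θ y p.1 = 0)) :=
  annihilator_of_central_extension_general mul θ
end

section
/- The 4-dimensional complex algebra L⁴₀₁ with basis e₁,e₂,e₃,e₄ and nonzero products e₁e₁ = e₂, e₁e₂ = e₄, e₂e₃ = e₄, e₃e₁ = e₄ is a nilpotent left-symmetric algebra that is not a Novikov algebra. -/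
/-- Span of the set of products of an element of `S` with an element of `T`. -/
def mulSpan {V : Type*} [AddCommGroup V] [Module ℂ V] (mul : V → V → V)
    (S T : Submodule ℂ V) : Submodule ℂ V :=
  Submodule.span ℂ {z | ∃ x ∈ S, ∃ y ∈ T, z = mul x y}

/-- `piece mul n` is the span of all products of `n + 1` elements of the
algebra `(V, mul)`, with all possible bracketings. -/
def piece {V : Type*} [AddCommGroup V] [Module ℂ V] (mul : V → V → V) : ℕ → Submodule ℂ V
  | 0 => ⊤
  | n + 1 => ⨆ i : Fin (n + 1), mulSpan mul (piece mul i.1) (piece mul (n - i.1))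

/-- An algebra is nilpotent if some power (with all bracketings) is zero. -/
def IsNilpotentMul {V : Type*} [AddCommGroup V] [Module ℂ V] (mul : V → V → V) : Prop :=
  ∃ n : ℕ, piece mul n = ⊥

/-- Multiplication of the algebra `L⁴₀₁`: on the basis `e₁, e₂, e₃, e₄`
(indexed `0,…,3`) the nonzero products are
`e₁e₁ = e₂`, `e₁e₂ = e₄`, `e₂e₃ = e₄`, `e₃e₁ = e₄`. -/
def mulL401 (x y : Fin 4 → ℂ) : Fin 4 → ℂ :=
  ![0, x 0 * y 0, 0, x 0 * y 1 + x 1 * y 2 + x 2 * y 0]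

/-!
Left symmetry is a coordinate identity. For nilpotence, `A² ⊆ span{e₂, e₄}` and
`A³ ⊆ span{e₄}`; since `e₄` annihilates `A` on both sides and `span{e₂, e₄}` squares to zero,
each of `A·A³`, `A²·A²`, `A³·A` vanishes. Novikov fails because `(e₁e₁)e₃ = e₄` but `(e₁e₃)e₁ = 0`.
-/

theorem piece_succ_le {V : Type*} [AddCommGroup V] [Module ℂ V] {mul : V → V → V} {n : ℕ}
    {U : Submodule ℂ V}
    (h : ∀ i ≤ n, ∀ x ∈ piece mul i, ∀ y ∈ piece mul (n - i), mul x y ∈ U) :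
    piece mul (n + 1) ≤ U := by
  rw [piece]
  refine iSup_le fun i => Submodule.span_le.2 ?_
  rintro z ⟨x, hx, y, hy, rfl⟩
  exact h i (Nat.lt_succ_iff.1 i.2) x hx y hy

namespace L401

def spanE₂E₄ : Submodule ℂ (Fin 4 → ℂ) where
  carrier := {v | v 0 = 0 ∧ v 2 = 0}
  add_mem' ha hb := by simp_all
  zero_mem' := by simp
  smul_mem' c v hv := by simp_all

def spanE₄ : Submodule ℂ (Fin 4 → ℂ) where
  carrier := {v | v 0 = 0 ∧ v 1 = 0 ∧ v 2 = 0}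
  add_mem' ha hb := by simp_all
  zero_mem' := by simp
  smul_mem' c v hv := by simp_all

theorem mul_mem_spanE₂E₄ (x y : Fin 4 → ℂ) : mulL401 x y ∈ spanE₂E₄ :=
  ⟨rfl, rfl⟩

theorem mul_mem_spanE₄ {x y : Fin 4 → ℂ} (h : x ∈ spanE₂E₄ ∨ y ∈ spanE₂E₄) :
    mulL401 x y ∈ spanE₄ := by
  refine ⟨rfl, ?_, rfl⟩
  rcases h with ⟨h0, -⟩ | ⟨h0, -⟩ <;> simp [mulL401, h0]

theorem mul_eq_zero_of_mem_spanE₄ {x y : Fin 4 → ℂ} (h : x ∈ spanE₄ ∨ y ∈ spanE₄) :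
    mulL401 x y = 0 := by
  funext i
  rcases h with ⟨h0, h1, h2⟩ | ⟨h0, h1, h2⟩ <;> fin_cases i <;> simp [mulL401, h0, h1, h2]

theorem mul_eq_zero_of_mem_spanE₂E₄ {x y : Fin 4 → ℂ} (hx : x ∈ spanE₂E₄) (hy : y ∈ spanE₂E₄) :
    mulL401 x y = 0 := by
  funext i
  fin_cases i <;> simp [mulL401, hx.1, hx.2, hy.1, hy.2]

theorem piece_one_le : piece mulL401 1 ≤ spanE₂E₄ :=
  piece_succ_le fun _ _ x _ y _ => mul_mem_spanE₂E₄ x y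

theorem piece_two_le : piece mulL401 2 ≤ spanE₄ := by
  refine piece_succ_le fun i hi x hx y hy => mul_mem_spanE₄ ?_
  interval_cases i
  · exact Or.inr (piece_one_le hy)
  · exact Or.inl (piece_one_le hx)

theorem piece_three_eq_bot : piece mulL401 3 = ⊥ := by
  refine le_bot_iff.1 (piece_succ_le fun i hi x hx y hy => ?_)
  rw [Submodule.mem_bot]
  interval_cases i
  · exact mul_eq_zero_of_mem_spanE₄ (Or.inr (piece_two_le hy))
  · exact mul_eq_zero_of_mem_spanE₂E₄ (piece_one_le hx) (piece_one_le hy)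
  · exact mul_eq_zero_of_mem_spanE₄ (Or.inl (piece_two_le hx))

end L401

/-- `L⁴₀₁` is a nilpotent left-symmetric algebra that is not a
Novikov algebra. -/
theorem L401_nilpotent_leftSymmetric_not_novikov :
    (∀ x y z : Fin 4 → ℂ,
      mulL401 (mulL401 x y) z - mulL401 x (mulL401 y z) =
      mulL401 (mulL401 y x) z - mulL401 y (mulL401 x z)) ∧
    IsNilpotentMul mulL401 ∧
    ¬ (∀ x y z : Fin 4 → ℂ, mulL401 (mulL401 x y) z = mulL401 (mulL401 x z) y) := by
  refine ⟨fun x y z => ?_, ⟨3, L401.piece_three_eq_bot⟩, fun hNovikov => ?_⟩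
  · funext i
    fin_cases i <;> simp [mulL401]
    ring
  · have h := congrFun (hNovikov ![1, 0, 0, 0] ![1, 0, 0, 0] ![0, 0, 1, 0]) 3
    simp [mulL401] at h
end

section
/- Up to isomorphism, the unique nontrivial (nonzero product) 2-dimensional nilpotent left-symmetric algebra over ℂ is the algebra with basis e₁,e₂ and only nonzero product e₁e₁ = e₂. That is, any 2-dimensional left-symmetric algebra A with A·A ⊆ Ann(A) and A·A ≠ 0 is isomorphic to this algebra. -/
/-!
If `v ≠ 0` lies in the two-sided annihilator of a product on a plane, then in any basis `e, v`
every product is a multiple of `e e`. Taking for `v` a nonzero product `x y`, this forces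
`u u ≠ 0` for `u := e`. Then `u` and `w := u u` form a basis too (since `u w = 0 ≠ u u`), and in
it the product reads `a b = a₀ b₀ w`, which is the model algebra.
-/

/-- Multiplication of the model algebra: basis `e₁, e₂` (indexed `0,1`), only
nonzero product `e₁e₁ = e₂`. -/
def mulL201 (x y : Fin 2 → ℂ) : Fin 2 → ℂ :=
  ![0, x 0 * y 0]

def mulAnnihilator {R M : Type*} [CommSemiring R] [AddCommMonoid M] [Module R M]
    (mul : M →ₗ[R] M →ₗ[R] M) : Set M :=
  {z | ∀ a, mul z a = 0 ∧ mul a z = 0}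

section Structure

variable {R M ι : Type*} [CommSemiring R] [AddCommMonoid M] [Module R M] [DecidableEq ι]

theorem mul_eq_repr_mul_repr_smul (mul : M →ₗ[R] M →ₗ[R] M) (b : Module.Basis ι R M) (i : ι)
    (hann : ∀ j ≠ i, b j ∈ mulAnnihilator mul) (x y : M) :
    mul x y = (b.repr x i * b.repr y i) • mul (b i) (b i) := by
  have hmul : mul = (b.coord i).smulRight ((b.coord i).smulRight (mul (b i) (b i))) := by
    refine LinearMap.ext_basis b b fun j k => ?_
    by_cases hj : j = i
    · by_cases hk : k = i
      · subst hj hk; simp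
      · subst hj; simp [(hann k hk (b j)).2, Ne.symm hk]
    · simp [(hann j hj (b k)).1, Ne.symm hj]
  rw [hmul]
  simp [mul_smul]

end Structure

section Plane

variable {K M : Type*} [Field K] [AddCommGroup M] [Module K M]

theorem exists_basis_fin_two_apply_one (hdim : Module.finrank K M = 2) {v : M} (hv : v ≠ 0) :
    ∃ b : Module.Basis (Fin 2) K M, b 1 = v := by
  obtain ⟨e, he⟩ := exists_linearIndependent_cons_of_lt_finrank
    (linearIndependent_unique_iff.mpr hv : LinearIndependent K ![v]) (by omega)
  refine ⟨basisOfLinearIndependentOfCardEqFinrank he (by simp [hdim]), ?_⟩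
  simp [coe_basisOfLinearIndependentOfCardEqFinrank]

theorem linearIndependent_pair_mul_self (mul : M →ₗ[K] M →ₗ[K] M) {u : M}
    (hu : mul u u ≠ 0) (hann : mul u (mul u u) = 0) :
    LinearIndependent K ![u, mul u u] := by
  rw [LinearIndependent.pair_iff]
  intro s t hst
  have hs : s = 0 := by simpa [hann, hu] using congrArg (mul u) hst
  subst hs
  simpa [hu] using hst

end Plane

theorem equivFun_mul_eq_mulL201 {A : Type*} [AddCommGroup A] [Module ℂ A]
    (mul : A →ₗ[ℂ] A →ₗ[ℂ] A) (b : Module.Basis (Fin 2) ℂ A)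
    (hmul : ∀ x y, mul x y = (b.repr x 0 * b.repr y 0) • b 1) (x y : A) :
    b.equivFun (mul x y) = mulL201 (b.equivFun x) (b.equivFun y) := by
  ext j
  fin_cases j <;> simp [hmul, mulL201]

theorem unique_2dim_nilpotent_leftSymmetric_general
    {A : Type*} [AddCommGroup A] [Module ℂ A]
    (hdim : Module.finrank ℂ A = 2)
    (mul : A →ₗ[ℂ] A →ₗ[ℂ] A)
    (hnil : ∀ x y z : A, mul (mul x y) z = 0 ∧ mul z (mul x y) = 0)
    (hne : ∃ x y : A, mul x y ≠ 0) :
    ∃ φ : A ≃ₗ[ℂ] (Fin 2 → ℂ),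
      ∀ a b : A, φ (mul a b) = mulL201 (φ a) (φ b) := by
  have hsq_ann : ∀ x y, mul x y ∈ mulAnnihilator mul := fun x y z => hnil x y z
  obtain ⟨x, y, hxy⟩ := hne
  obtain ⟨b, hb⟩ := exists_basis_fin_two_apply_one hdim hxy
  set u := b 0
  have hu : mul u u ≠ 0 := by
    intro h
    apply hxy
    rw [mul_eq_repr_mul_repr_smul mul b 0 (fun j hj => ?_) x y, h, smul_zero]
    rw [Fin.eq_one_of_ne_zero j hj, hb]
    exact hsq_ann x y
  let c := basisOfLinearIndependentOfCardEqFinrank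
    (linearIndependent_pair_mul_self mul hu (hsq_ann u u u).2) (by simp [hdim])
  have hc : ⇑c = ![u, mul u u] := coe_basisOfLinearIndependentOfCardEqFinrank _ _
  refine ⟨c.equivFun, equivFun_mul_eq_mulL201 mul c fun x y => ?_⟩
  rw [mul_eq_repr_mul_repr_smul mul c 0 (fun j hj => ?_) x y]
  · simp [hc]
  · rw [Fin.eq_one_of_ne_zero j hj, hc]
    exact hsq_ann u u

/-- any 2-dimensional left-symmetric algebra `A` over `ℂ` with
`A·A ⊆ Ann(A)` and `A·A ≠ 0` is isomorphic to the algebra with basis `e₁, e₂`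
and only nonzero product `e₁e₁ = e₂`; i.e. this is, up to isomorphism, the
unique nontrivial 2-dimensional nilpotent left-symmetric algebra. -/
theorem unique_2dim_nilpotent_leftSymmetric
    {A : Type*} [AddCommGroup A] [Module ℂ A]
    (hdim : Module.finrank ℂ A = 2)
    (mul : A →ₗ[ℂ] A →ₗ[ℂ] A)
    (hLS : ∀ x y z : A,
      mul (mul x y) z - mul x (mul y z) = mul (mul y x) z - mul y (mul x z))
    (hnil : ∀ x y z : A, mul (mul x y) z = 0 ∧ mul z (mul x y) = 0)
    (hne : ∃ x y : A, mul x y ≠ 0) :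
    ∃ φ : A ≃ₗ[ℂ] (Fin 2 → ℂ),
      ∀ a b : A, φ (mul a b) = mulL201 (φ a) (φ b) :=
  unique_2dim_nilpotent_leftSymmetric_general hdim mul hnil hne
end

section
/- For each λ ≠ 0, the dimension of the derivation algebra of L⁴₁₂(λ) (basis e₁,...,e₄; e₁e₁=λe₃, e₁e₂=e₄, e₂e₁=e₃, e₂e₂=e₃, e₂e₃=e₄, e₃e₁=λe₄) equals 2. -/
open Finset

/-- Multiplication on `ℂⁿ` given by structure constants `c`. -/
noncomputable def mulOf {n : ℕ} (c : Fin n → Fin n → Fin n → ℂ) (x y : Fin n → ℂ) : Fin n → ℂ :=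
  fun k => ∑ i, ∑ j, x i * y j * c i j k

lemma mulOf_add_left {n : ℕ} (c : Fin n → Fin n → Fin n → ℂ) (x x' y : Fin n → ℂ) :
    mulOf c (x + x') y = mulOf c x y + mulOf c x' y := by
  funext k
  simp [mulOf, add_mul, Finset.sum_add_distrib]

lemma mulOf_add_right {n : ℕ} (c : Fin n → Fin n → Fin n → ℂ) (x y y' : Fin n → ℂ) :
    mulOf c x (y + y') = mulOf c x y + mulOf c x y' := by
  funext k
  simp [mulOf, mul_add, add_mul, Finset.sum_add_distrib]

lemma mulOf_smul_left {n : ℕ} (c : Fin n → Fin n → Fin n → ℂ) (a : ℂ) (x y : Fin n → ℂ) :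
    mulOf c (a • x) y = a • mulOf c x y := by
  funext k
  simp only [mulOf, Pi.smul_apply, smul_eq_mul, Finset.mul_sum]
  congr 1; ext i; congr 1; ext j; ring

lemma mulOf_smul_right {n : ℕ} (c : Fin n → Fin n → Fin n → ℂ) (a : ℂ) (x y : Fin n → ℂ) :
    mulOf c x (a • y) = a • mulOf c x y := by
  funext k
  simp only [mulOf, Pi.smul_apply, smul_eq_mul, Finset.mul_sum]
  congr 1; ext i; congr 1; ext j; ring

/-- The Lie algebra (here: subspace) of derivations of the algebra on `ℂⁿ`
with structure constants `c`. -/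
noncomputable def derSpace {n : ℕ} (c : Fin n → Fin n → Fin n → ℂ) :
    Submodule ℂ ((Fin n → ℂ) →ₗ[ℂ] (Fin n → ℂ)) where
  carrier := {d | ∀ x y : Fin n → ℂ,
    d (mulOf c x y) = mulOf c (d x) y + mulOf c x (d y)}
  add_mem' := by
    intro d e hd he x y
    simp only [LinearMap.add_apply, hd x y, he x y, mulOf_add_left, mulOf_add_right]
    abel
  zero_mem' := by
    intro x y
    have h0 : ∀ z : Fin n → ℂ, mulOf c 0 z = 0 := by
      intro z; funext k; simp [mulOf]
    have h0' : ∀ z : Fin n → ℂ, mulOf c z 0 = 0 := by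
      intro z; funext k; simp [mulOf]
    simp [h0, h0']
  smul_mem' := by
    intro a d hd x y
    simp only [LinearMap.smul_apply, hd x y, mulOf_smul_left, mulOf_smul_right, smul_add]


/-- Structure constants of `L⁴₁₂(λ)` (indices `0,…,3`): the nonzero products
are `e₁e₁ = λe₃`, `e₁e₂ = e₄`, `e₂e₁ = e₃`, `e₂e₂ = e₃`, `e₂e₃ = e₄`,
`e₃e₁ = λe₄`. -/
def c412 (l : ℂ) : Fin 4 → Fin 4 → Fin 4 → ℂ :=
  ![![![0, 0, l, 0], ![0, 0, 0, 1], ![0, 0, 0, 0], ![0, 0, 0, 0]],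
    ![![0, 0, 1, 0], ![0, 0, 1, 0], ![0, 0, 0, 1], ![0, 0, 0, 0]],
    ![![0, 0, 0, l], ![0, 0, 0, 0], ![0, 0, 0, 0], ![0, 0, 0, 0]],
    ![![0, 0, 0, 0], ![0, 0, 0, 0], ![0, 0, 0, 0], ![0, 0, 0, 0]]]

/-!
Since `A² = span(e₃, e₄)` and `e₄` annihilates `A`, the maps `x ↦ x₁e₄` and `x ↦ x₂e₄` are
derivations. Conversely, the derivation rule on the basis products is a linear system in the
matrix entries of a derivation `d`. The products `e₂e₂ = e₃`, `e₂e₁ = e₃`, `e₁e₂ = e₄`,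
`e₂e₃ = e₄` leave no room for a nonzero diagonal, and for `λ ≠ 0` the products `e₁e₁ = λe₃`,
`e₃e₁ = λe₄` kill the remaining off-diagonal entries, so `d` is a combination of the two
maps above.
-/

section StructureConstants

variable {n : ℕ} (c : Fin n → Fin n → Fin n → ℂ)

lemma mulOf_single_left (a : Fin n) (y : Fin n → ℂ) (k : Fin n) :
    mulOf c (Pi.single a 1) y k = ∑ t, y t * c a t k := by
  simp [mulOf, Pi.single_apply]

lemma mulOf_single_right (x : Fin n → ℂ) (b : Fin n) (k : Fin n) :
    mulOf c x (Pi.single b 1) k = ∑ t, x t * c t b k := by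
  simp [mulOf, Pi.single_apply]

lemma mulOf_single_single (a b : Fin n) : mulOf c (Pi.single a 1) (Pi.single b 1) = c a b := by
  funext k
  simp [mulOf_single_left, Pi.single_apply]

variable {c}

theorem sum_mul_apply_single_of_mem_derSpace {d : (Fin n → ℂ) →ₗ[ℂ] (Fin n → ℂ)}
    (hd : d ∈ derSpace c) (a b k : Fin n) :
    ∑ t, c a b t * d (Pi.single t 1) k
      = ∑ t, d (Pi.single a 1) t * c t b k + ∑ t, d (Pi.single b 1) t * c a t k := by
  have h := congrFun (hd (Pi.single a 1) (Pi.single b 1)) k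
  rw [mulOf_single_single, Pi.add_apply, mulOf_single_left, mulOf_single_right] at h
  rw [← h]
  conv_rhs => rw [pi_eq_sum_univ' (c a b), map_sum, Finset.sum_apply]
  simp only [map_smul, Pi.smul_apply, smul_eq_mul]

end StructureConstants

section SingleProj

variable {n : ℕ}

noncomputable def singleProj (i j : Fin n) : (Fin n → ℂ) →ₗ[ℂ] (Fin n → ℂ) :=
  (LinearMap.single ℂ (fun _ : Fin n => ℂ) j).comp (LinearMap.proj i)

lemma singleProj_apply (i j : Fin n) (x : Fin n → ℂ) : singleProj i j x = Pi.single j (x i) :=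
  rfl

-- `x ↦ xᵢ eⱼ` is a derivation as soon as `x ↦ xᵢ` vanishes on `A²` and `eⱼ` annihilates `A`.
lemma singleProj_mem_derSpace {c : Fin n → Fin n → Fin n → ℂ} {i j : Fin n}
    (hi : ∀ a b, c a b i = 0) (hjl : ∀ b k, c j b k = 0) (hjr : ∀ a k, c a j k = 0) :
    singleProj i j ∈ derSpace c := by
  intro x y
  funext k
  simp [mulOf, singleProj_apply, Pi.single_apply, hi, hjl, hjr]

lemma linearIndependent_singleProj {i i' : Fin n} (h : i ≠ i') (j : Fin n) :
    LinearIndependent ℂ ![singleProj i j, singleProj i' j] := by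
  rw [linearIndependent_fin2]
  refine ⟨fun h0 => ?_, fun a ha => ?_⟩
  · simpa [singleProj_apply] using congrFun (LinearMap.congr_fun h0 (Pi.single i' 1)) j
  · simpa [singleProj_apply, h] using congrFun (LinearMap.congr_fun ha (Pi.single i 1)) j

end SingleProj

lemma singleProj_mem_derSpace_c412 (l : ℂ) {i : Fin 4} (hi : i = 0 ∨ i = 1) :
    singleProj i 3 ∈ derSpace (c412 l) := by
  rcases hi with rfl | rfl <;> apply singleProj_mem_derSpace <;>
    simp [c412, Fin.forall_fin_succ]

section L412

variable {l : ℂ} {d : (Fin 4 → ℂ) →ₗ[ℂ] (Fin 4 → ℂ)}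

theorem apply_single_eq_zero_of_mem_derSpace_c412 (hl : l ≠ 0) (hd : d ∈ derSpace (c412 l))
    {i k : Fin 4} (hik : k ≠ 3 ∨ 2 ≤ i) : d (Pi.single i 1) k = 0 := by
  have e := sum_mul_apply_single_of_mem_derSpace hd
  -- `eabk` is coordinate `k` of the derivation rule on `e_a e_b` (indices from `0`).
  have e110 := e 1 1 0
  have e111 := e 1 1 1
  have e010 := e 0 1 0
  have e011 := e 0 1 1
  have e122 := e 1 2 2
  have e023 := e 0 2 3
  have e213 := e 2 1 3
  have e112 := e 1 1 2
  have e102 := e 1 0 2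
  have e123 := e 1 2 3
  have e013 := e 0 1 3
  have e113 := e 1 1 3
  have e103 := e 1 0 3
  have e003 := e 0 0 3
  simp only [c412, Fin.isValue, Matrix.cons_val', Matrix.cons_val_one, Matrix.cons_val_zero,
    Matrix.cons_val_fin_one, Fin.sum_univ_four, zero_mul, add_zero, Matrix.cons_val, one_mul,
    zero_add, mul_zero, mul_one]
    at e110 e111 e010 e011 e122 e023 e213 e112 e102 e123 e013 e113 e103 e003
  have z32 : d (Pi.single 3 1) 2 = 0 := by rw [e122, e110, e111, add_zero]
  have z01 : d (Pi.single 0 1) 1 = 0 := by linear_combination -e023 - e111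
  have z10 : d (Pi.single 1 1) 0 = 0 := by
    have : d (Pi.single 1 1) 0 * l = 0 := by linear_combination -e213 - e110
    exact (mul_eq_zero.mp this).resolve_right hl
  have z11 : d (Pi.single 1 1) 1 = 0 := by linear_combination -e102 - e123 + e013 - l * z10 - z01
  have z00 : d (Pi.single 0 1) 0 = 0 := by linear_combination e123 - e013 + e112 + 2 * z11 + z10
  have z22 : d (Pi.single 2 1) 2 = 0 := by linear_combination e112 + 2 * z11 + z10
  have z33 : d (Pi.single 3 1) 3 = 0 := by linear_combination e013 + z00 + z11
  have z12 : d (Pi.single 1 1) 2 = 0 := by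
    have : l ^ 2 * d (Pi.single 1 1) 2 = 0 := by linear_combination e003 - l * e103 + z01
    exact (mul_eq_zero.mp this).resolve_left (pow_ne_zero 2 hl)
  have z23 : d (Pi.single 2 1) 3 = 0 := by linear_combination e113 + z10 + z12
  have z02 : d (Pi.single 0 1) 2 = 0 := by linear_combination -e103 + z23 - l * z12
  fin_cases i <;> fin_cases k <;> first | assumption | simp at hik

theorem eq_of_mem_derSpace_c412 (hl : l ≠ 0) (hd : d ∈ derSpace (c412 l)) :
    d = d (Pi.single 0 1) 3 • singleProj 0 3 + d (Pi.single 1 1) 3 • singleProj 1 3 := by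
  refine (Pi.basisFun ℂ (Fin 4)).ext fun i => funext fun k => ?_
  by_cases hik : k ≠ 3 ∨ 2 ≤ i
  · rw [Pi.basisFun_apply, apply_single_eq_zero_of_mem_derSpace_c412 hl hd hik]
    fin_cases i <;> fin_cases k <;> simp [singleProj_apply] at hik ⊢
  · rw [not_or, not_not, not_le] at hik
    obtain ⟨rfl, hi⟩ := hik
    fin_cases i <;> simp [singleProj_apply] at hi ⊢

theorem derSpace_c412_eq_span (hl : l ≠ 0) :
    derSpace (c412 l) = Submodule.span ℂ (Set.range ![singleProj 0 3, singleProj 1 3]) := by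
  refine le_antisymm (fun d hd => ?_) (Submodule.span_le.mpr ?_)
  · rw [eq_of_mem_derSpace_c412 hl hd]
    exact add_mem (Submodule.smul_mem _ _ (Submodule.subset_span ⟨0, rfl⟩))
      (Submodule.smul_mem _ _ (Submodule.subset_span ⟨1, rfl⟩))
  · rintro _ ⟨i, rfl⟩
    fin_cases i
    exacts [singleProj_mem_derSpace_c412 l (Or.inl rfl), singleProj_mem_derSpace_c412 l (Or.inr rfl)]

end L412

/-- for each `λ ≠ 0`, the derivation algebra of `L⁴₁₂(λ)` has
dimension `2`. -/
theorem L412_derivations_dim_two (l : ℂ) (hl : l ≠ 0) :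
    Module.finrank ℂ (derSpace (c412 l)) = 2 := by
  rw [derSpace_c412_eq_span hl, finrank_span_eq_card (linearIndependent_singleProj (by decide) 3)]
  simp
end
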